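/- Let A be the nilpotent matrix defined in block form as in equation (2.33) of the paper: A is block lower-bidiagonal with zero diagonal blocks of sizes r₁,...,r_{n−1}, N, ℓ_{n−1},...,ℓ₁ (where r_i ≤ r_{i+1} for all i, r_{n−1} ≤ N, ℓ_{i+1} ≤ ℓ_i) and subdiagonal blocks R_i = [[I_{r_i}],[0]] (size r_{i+1}×r_i for i ≤ n−2), R_{n−1} = [[I_{r_{n−1}}],[0]] (size N×r_{n−1}), S of size ℓ_{n−1}×N with S = [[I_{m−e}, 0],[0, 0]] where m−e ≥ r_{n−1}, and L_i = [[I_{ℓ_{i+1}}],[0]] (size ℓ_i×ℓ_{i+1}). If r₁ > 0, then A^{2n−2} ≠ 0; in fact rank(A^{2n−2}) ≥ r₁. -/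

import Mathlib

open Matrix

/-- Sizes of the diagonal blocks: `r₁, ..., r_{n−1}, N, ℓ_{n−1}, ..., ℓ₁`
(0-indexed: block `j` for `j < n−1` has size `r j`, block `n−1` has size `N`,
block `j` for `j ≥ n` has size `l (2n−2−j)`). -/
def blkSize (n N : ℕ) (r l : ℕ → ℕ) (j : ℕ) : ℕ :=
  if j < n - 1 then r j else if j = n - 1 then N else l (2 * n - 2 - j)

/-- Size of the identity in the subdiagonal block below diagonal block `j`:
it is `m − e` for the block `S` (at `j = n−1`), and the size of the source block
otherwise. -/
def idSize (n N m e : ℕ) (r l : ℕ → ℕ) (j : ℕ) : ℕ :=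
  if j = n - 1 then m - e else blkSize n N r l j

/-- Partial sums of the block sizes. -/
def blkStart (n N : ℕ) (r l : ℕ → ℕ) (j : ℕ) : ℕ :=
  ∑ u ∈ Finset.range j, blkSize n N r l u

/-- The nilpotent matrix `A` of equation (2.33): block lower bidiagonal with zero diagonal
blocks and subdiagonal blocks `R₁, ..., R_{n−1}, S, L_{n−1}, ..., L₂`, each of which is a
matrix with an identity block of the prescribed size in the upper-left corner and zeros
elsewhere. -/
noncomputable def Amat (F : Type*) [Field F] (n N m e : ℕ) (r l : ℕ → ℕ) :
    Matrix (Fin (blkStart n N r l (2 * n - 1))) (Fin (blkStart n N r l (2 * n - 1))) F :=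
  open scoped Classical in
  Matrix.of fun p q =>
    if ∃ j ∈ Finset.range (2 * n - 2),
        blkStart n N r l j ≤ (q : ℕ) ∧
        (q : ℕ) - blkStart n N r l j < idSize n N m e r l j ∧
        (p : ℕ) = blkStart n N r l (j + 1) + ((q : ℕ) - blkStart n N r l j)
    then 1 else 0

/-! For `t < r₁` every identity block is wider than `t`, so `A` sends the `t`-th basis vector of
block `j` to the `t`-th basis vector of block `j + 1`. Hence `A^{2n−2}` carries the first `r₁`
basis vectors of the first block to the first `r₁` basis vectors of the last block, i.e. it has an
`r₁ × r₁` identity submatrix. -/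

open Set

section Blocks

variable (n N : ℕ) (r l : ℕ → ℕ)

lemma blkStart_zero : blkStart n N r l 0 = 0 := Finset.sum_range_zero _

lemma blkStart_succ (j : ℕ) :
    blkStart n N r l (j + 1) = blkStart n N r l j + blkSize n N r l j :=
  Finset.sum_range_succ _ _

lemma blkStart_mono : Monotone (blkStart n N r l) :=
  fun _ _ h => Finset.sum_le_sum_of_subset (Finset.range_subset_range.2 h)

lemma idSize_le_blkSize {m e : ℕ} (hme : m - e ≤ N) (j : ℕ) :
    idSize n N m e r l j ≤ blkSize n N r l j := by
  unfold idSize blkSize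
  split_ifs <;> omega

variable {n N r l}

lemma eq_of_mem_block {i j x : ℕ}
    (hi : blkStart n N r l i ≤ x) (hi' : x < blkStart n N r l (i + 1))
    (hj : blkStart n N r l j ≤ x) (hj' : x < blkStart n N r l (j + 1)) : i = j := by
  by_contra hne
  rcases Nat.lt_or_gt_of_ne hne with h | h
  · have := blkStart_mono n N r l (show i + 1 ≤ j from h); omega
  · have := blkStart_mono n N r l (show j + 1 ≤ i from h); omega

lemma r_zero_le_idSize {m e : ℕ} (hr : MonotoneOn r (Iio (n - 1)))
    (hl : AntitoneOn l (Iio (n - 1))) (hme2 : m - e ≤ l (n - 2)) (hme3 : r (n - 2) ≤ m - e) {j : ℕ} (hj : j ≤ 2 * n - 2) :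
    r 0 ≤ idSize n N m e r l j := by
  have hr0 : r 0 ≤ m - e := by
    refine le_trans ?_ hme3
    rcases Nat.lt_or_ge 1 n with hn | hn
    · exact hr (by simp; omega) (by simp; omega) (Nat.zero_le _)
    · rw [show n - 2 = 0 by omega]
  unfold idSize blkSize
  split_ifs with h1 h2
  · exact hr0
  · exact hr (by simp; omega) (by simpa using h2) (Nat.zero_le _)
  · exact hr0.trans (hme2.trans (hl (by simp; omega) (by simp; omega) (by omega)))

end Blocks

section Columns

variable {M : Type*} [Zero M] {D i : ℕ}

/- Basis vectors of `Fin D → M` are written `Pi.single i x ∘ Fin.val` with `i : ℕ` (zero when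
`i ≥ D`), which keeps the block arithmetic free of bound proofs. -/
lemma single_comp_val_of_lt (h : i < D) (x : M) :
    (Pi.single i x ∘ Fin.val : Fin D → M) = Pi.single ⟨i, h⟩ x := by
  ext p
  simp [Pi.single_apply, Fin.ext_iff]

lemma single_comp_val_of_le (h : D ≤ i) (x : M) :
    (Pi.single i x ∘ Fin.val : Fin D → M) = 0 := by
  ext p
  simp [(show (p : ℕ) ≠ i by omega)]

end Columns

section Amat

variable {F : Type*} [Field F] {n N m e : ℕ} {r l : ℕ → ℕ}

lemma Amat_apply_of_val_eq (hme : m - e ≤ N) {j t : ℕ} (hj : j < 2 * n - 2)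
    (ht : t < idSize n N m e r l j) (p q : Fin (blkStart n N r l (2 * n - 1)))
    (hq : (q : ℕ) = blkStart n N r l j + t) :
    Amat F n N m e r l p q = if (p : ℕ) = blkStart n N r l (j + 1) + t then 1 else 0 := by
  rw [Amat, of_apply]
  by_cases hp : (p : ℕ) = blkStart n N r l (j + 1) + t
  · rw [if_pos hp, if_pos]
    exact ⟨j, Finset.mem_range.2 hj, by omega, by omega, by omega⟩
  · rw [if_neg hp, if_neg]
    rintro ⟨i, -, hi, hi', hpi⟩
    have hij : i = j := by
      have hsize := idSize_le_blkSize n N r l hme i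
      have hsize' := idSize_le_blkSize n N r l hme j
      have hsucc := blkStart_succ n N r l i
      have hsucc' := blkStart_succ n N r l j
      exact eq_of_mem_block hi (by omega) (by omega : blkStart n N r l j ≤ q) (by omega)
    subst hij
    omega

lemma Amat_mulVec_single (hme : m - e ≤ N) {j t : ℕ} (hj : j < 2 * n - 2)
    (ht : t < idSize n N m e r l j) :
    Amat F n N m e r l *ᵥ (Pi.single (blkStart n N r l j + t) 1 ∘ Fin.val) =
      Pi.single (blkStart n N r l (j + 1) + t) 1 ∘ Fin.val := by
  by_cases hq : blkStart n N r l j + t < blkStart n N r l (2 * n - 1)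
  · ext p
    rw [single_comp_val_of_lt hq, mulVec_single_one, col_apply,
      Amat_apply_of_val_eq hme hj ht p _ rfl]
    simp [Pi.single_apply]
  · have hsucc := blkStart_succ n N r l j
    rw [single_comp_val_of_le (not_lt.1 hq), mulVec_zero, single_comp_val_of_le (by omega)]

lemma Amat_pow_mulVec_single (hme : m - e ≤ N) {k t : ℕ} (hk : k ≤ 2 * n - 2)
    (ht : ∀ j < k, t < idSize n N m e r l j) :
    Amat F n N m e r l ^ k *ᵥ (Pi.single t 1 ∘ Fin.val) =
      Pi.single (blkStart n N r l k + t) 1 ∘ Fin.val := by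
  induction k with
  | zero => rw [pow_zero, one_mulVec, blkStart_zero, zero_add]
  | succ k ih =>
    rw [pow_succ', ← mulVec_mulVec, ih (by omega) fun j hj => ht j (by omega),
      Amat_mulVec_single hme (by omega) (ht k k.lt_succ_self)]

end Amat

lemma Matrix.card_le_rank_of_submatrix_eq_one {R k m n : Type*} [CommSemiring R]
    [StrongRankCondition R] [Fintype k] [DecidableEq k] [Fintype n] (M : Matrix m n R)
    (row : k → m) (col : k → n) (h : M.submatrix row col = 1) : Fintype.card k ≤ M.rank := by
  simpa only [h, rank_one] using rank_submatrix_le M row col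

theorem Amat_power_ne_zero_general (F : Type*) [Field F] (n N m e : ℕ) (r l : ℕ → ℕ)
    (hn : 2 ≤ n)
    (hrmono : ∀ j, j + 1 < n - 1 → r j ≤ r (j + 1))
    (hlmono : ∀ j, j + 1 < n - 1 → l (j + 1) ≤ l j)
    (hme1 : m - e ≤ N) (hme2 : m - e ≤ l (n - 2)) (hme3 : r (n - 2) ≤ m - e)
    (hr1 : 0 < r 0) :
    Amat F n N m e r l ^ (2 * n - 2) ≠ 0 ∧
    r 0 ≤ (Amat F n N m e r l ^ (2 * n - 2)).rank := by
  have hr : MonotoneOn r (Iio (n - 1)) :=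
    monotoneOn_of_le_succ ordConnected_Iio fun j _ _ hj => hrmono j (by simpa using hj)
  have hl : AntitoneOn l (Iio (n - 1)) :=
    antitoneOn_of_succ_le ordConnected_Iio fun j _ _ hj => hlmono j (by simpa using hj)
  have hsize (j : ℕ) (hj : j ≤ 2 * n - 2) : r 0 ≤ idSize n N m e r l j :=
    r_zero_le_idSize hr hl hme2 hme3 hj
  have hlast : blkStart n N r l (2 * n - 2) + r 0 ≤ blkStart n N r l (2 * n - 1) := by
    have hsucc := blkStart_succ n N r l (2 * n - 2)
    rw [show 2 * n - 2 + 1 = 2 * n - 1 by omega] at hsucc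
    have := idSize_le_blkSize n N r l hme1 (2 * n - 2)
    have := hsize (2 * n - 2) le_rfl
    omega
  let row (t : Fin (r 0)) : Fin (blkStart n N r l (2 * n - 1)) :=
    ⟨blkStart n N r l (2 * n - 2) + t, by omega⟩
  let col (t : Fin (r 0)) : Fin (blkStart n N r l (2 * n - 1)) := ⟨t, by omega⟩
  have hid : (Amat F n N m e r l ^ (2 * n - 2)).submatrix row col = 1 := by
    ext s t
    have hcol := congrFun (Amat_pow_mulVec_single (F := F) hme1 le_rfl
      fun j hj => t.isLt.trans_le (hsize j hj.le)) (row s)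
    rw [single_comp_val_of_lt (col t).isLt, mulVec_single_one, col_apply] at hcol
    rw [submatrix_apply, hcol, one_apply]
    simp [Pi.single_apply, row, Fin.ext_iff]
  have hrank := card_le_rank_of_submatrix_eq_one _ row col hid
  rw [Fintype.card_fin] at hrank
  refine ⟨fun h0 => ?_, hrank⟩
  rw [h0, rank_zero] at hrank
  omega

/-- if `r₁ > 0` then `A^{2n−2} ≠ 0`; in fact `rank(A^{2n−2}) ≥ r₁`. -/
theorem Amat_power_ne_zero (F : Type*) [Field F] (n N m e : ℕ) (r l : ℕ → ℕ)
    (hn : 2 ≤ n)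
    (hrmono : ∀ j, j + 1 < n - 1 → r j ≤ r (j + 1))
    (hrN : r (n - 2) ≤ N)
    (hlmono : ∀ j, j + 1 < n - 1 → l (j + 1) ≤ l j)
    (hme1 : m - e ≤ N) (hme2 : m - e ≤ l (n - 2)) (hme3 : r (n - 2) ≤ m - e)
    (hr1 : 0 < r 0) :
    Amat F n N m e r l ^ (2 * n - 2) ≠ 0 ∧
    r 0 ≤ (Amat F n N m e r l ^ (2 * n - 2)).rank :=
  Amat_power_ne_zero_general F n N m e r l hn hrmono hlmono hme1 hme2 hme3 hr1
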